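/- Let μ be a probability measure on G = F_p^d ⋊ SL_d(F_p), set α = max over x, y ∈ F_p^d of (μ.δ_x)(y), and assume α < 1. For an integer l ≥ 1 let α_l = max over x, y ∈ F_p^d of ((μ̌∗μ)^{*(l)}.δ_y)(x). Then for every integer l₀ ≥ 3/(1−α) one has α_{l₀} ≤ 9/16. -/

import Mathlib

/-!
The measure `ν = μ̌ ∗ μ` drives a random walk on `F_p^d` whose one-step transition
probabilities are at most `α`, since `(ν.δ_z)(w)` averages values `(μ.δ_z)(·)`. Two probability
vectors with entries bounded by `(1 + s)/2` and `(1 + r)/2` (`r, s ≥ 0`) have inner product at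
most `(1 + r s)/2`: only one entry of the first can exceed `1/2`. Writing the `(k+1)`-step
transition probability as such an inner product gives `α_k ≤ (1 + r^k)/2` with
`r = max (2α - 1) 0`, and `r ^ l₀ ≤ exp (-2 (1 - α) l₀) ≤ exp (-6) < 1/8`.
-/

open scoped BigOperators Matrix

namespace Paper

abbrev V (p d : ℕ) : Type := Fin d → ZMod p
abbrev SL (p d : ℕ) : Type := Matrix.SpecialLinearGroup (Fin d) (ZMod p)

/-- The group `F_p^d ⋊ SL_d(F_p)` with multiplication
`(v₁,θ₁)·(v₂,θ₂) = (v₁+θ₁v₂, θ₁θ₂)`. -/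
def Aff (p d : ℕ) : Type := V p d × SL p d

namespace Aff

variable {p d : ℕ}

/-- the translation part `v(g)` -/
def vec (g : Aff p d) : V p d := g.1

/-- the linear part `θ(g)` -/
def lin (g : Aff p d) : SL p d := g.2

def mk (v : V p d) (θ : SL p d) : Aff p d := (v, θ)

instance : Mul (Aff p d) :=
  ⟨fun g h => (g.1 + (g.2 : Matrix (Fin d) (Fin d) (ZMod p)) *ᵥ h.1, g.2 * h.2)⟩

instance : One (Aff p d) := ⟨((0 : V p d), (1 : SL p d))⟩

instance : Inv (Aff p d) :=
  ⟨fun g => (-(((g.2)⁻¹ : SL p d) : Matrix (Fin d) (Fin d) (ZMod p)) *ᵥ g.1, (g.2)⁻¹)⟩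

lemma mul_def (g h : Aff p d) :
    g * h = (g.1 + (g.2 : Matrix (Fin d) (Fin d) (ZMod p)) *ᵥ h.1, g.2 * h.2) := rfl

instance : Group (Aff p d) where
  mul_assoc a b c := by
    refine Prod.ext ?_ ?_
    · show (a.1 + (a.2 : Matrix (Fin d) (Fin d) (ZMod p)) *ᵥ b.1) +
        ((a.2 * b.2 : SL p d) : Matrix (Fin d) (Fin d) (ZMod p)) *ᵥ c.1 =
        a.1 + (a.2 : Matrix (Fin d) (Fin d) (ZMod p)) *ᵥ
          (b.1 + (b.2 : Matrix (Fin d) (Fin d) (ZMod p)) *ᵥ c.1)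
      simp [Matrix.mulVec_add, Matrix.mulVec_mulVec, add_assoc]
    · show a.2 * b.2 * c.2 = a.2 * (b.2 * c.2)
      exact mul_assoc _ _ _
  one_mul a := by
    refine Prod.ext ?_ ?_
    · show (0 : V p d) + ((1 : SL p d) : Matrix (Fin d) (Fin d) (ZMod p)) *ᵥ a.1 = a.1
      simp
    · show (1 : SL p d) * a.2 = a.2
      exact one_mul _
  mul_one a := by
    refine Prod.ext ?_ ?_
    · show a.1 + (a.2 : Matrix (Fin d) (Fin d) (ZMod p)) *ᵥ (0 : V p d) = a.1
      simp
    · show a.2 * 1 = a.2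
      exact mul_one _
  inv_mul_cancel a := by
    refine Prod.ext ?_ ?_
    · show -(((a.2)⁻¹ : SL p d) : Matrix (Fin d) (Fin d) (ZMod p)) *ᵥ a.1 +
        (((a.2)⁻¹ : SL p d) : Matrix (Fin d) (Fin d) (ZMod p)) *ᵥ a.1 = (0 : V p d)
      rw [Matrix.neg_mulVec]
      exact neg_add_cancel _
    · show (a.2)⁻¹ * a.2 = 1
      exact inv_mul_cancel _

instance : DecidableEq (SL p d) :=
  inferInstanceAs (DecidableEq {A : Matrix (Fin d) (Fin d) (ZMod p) // A.det = 1})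

instance : DecidableEq (Aff p d) := inferInstanceAs (DecidableEq (V p d × SL p d))

instance [NeZero p] : Fintype (Aff p d) := inferInstanceAs (Fintype (V p d × SL p d))

/-- the action of `Aff p d` on `F_p^d`: `g.x = v(g) + θ(g) x`. -/
def aact (g : Aff p d) (x : V p d) : V p d :=
  g.vec + (g.lin : Matrix (Fin d) (Fin d) (ZMod p)) *ᵥ x

end Aff

/-- Dirac measure at a point -/
def dirac {β : Type*} [DecidableEq β] (x : β) : β → ℝ := fun y => if y = x then 1 else 0

/-- probability measure (density w.r.t. counting measure) on a finite set -/
def IsProb {β : Type*} [Fintype β] (μ : β → ℝ) : Prop :=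
  (∀ x, 0 ≤ μ x) ∧ ∑ x, μ x = 1

/-- convolution of measures on a finite group -/
def conv {H : Type*} [Group H] [Fintype H] (μ ν : H → ℝ) : H → ℝ :=
  fun g => ∑ h, μ h * ν (h⁻¹ * g)

/-- `l`-fold convolution `μ^{*(l)}` -/
def itconv {H : Type*} [Group H] [Fintype H] [DecidableEq H] (μ : H → ℝ) : ℕ → H → ℝ
  | 0 => dirac 1
  | n + 1 => conv (itconv μ n) μ

/-- `μ̌(g) = μ(g⁻¹)` -/
def check {H : Type*} [Group H] (μ : H → ℝ) : H → ℝ := fun g => μ g⁻¹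

/-- the uniform probability measure on a finite subset -/
noncomputable def unif {H : Type*} [DecidableEq H] (S : Finset H) : H → ℝ :=
  fun g => if g ∈ S then ((S.card : ℝ))⁻¹ else 0

/-- `L²` norm (counting measure) of a complex-valued function on a finite set -/
noncomputable def cnorm2 {β : Type*} [Fintype β] (f : β → ℂ) : ℝ :=
  Real.sqrt (∑ x, ‖f x‖ ^ 2)

/-- the averaging operator `L(μ)` on `ℂ[H]` -/
noncomputable def avgOp {H : Type*} [Group H] [Fintype H] (μ : H → ℝ) (f : H → ℂ) : H → ℂ :=
  fun g => ∑ s, (μ s : ℂ) * f (s⁻¹ * g)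

/-- `‖L₀(μ)‖`: the operator norm, w.r.t. the `L²` norm for counting measure, of the
averaging operator `L(μ)` restricted to the functions with zero sum -/
noncomputable def L0norm {H : Type*} [Group H] [Fintype H] (μ : H → ℝ) : ℝ :=
  sSup {r : ℝ | ∃ f : H → ℂ, (∑ g, f g) = 0 ∧ cnorm2 f ≤ 1 ∧ r = cnorm2 (avgOp μ f)}

/-- `L²` norm (counting measure) of a real-valued function on a finite set -/
noncomputable def norm2V {β : Type*} [Fintype β] (η : β → ℝ) : ℝ :=
  Real.sqrt (∑ x, (η x) ^ 2)

variable {p d : ℕ}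

/-- the convolution `μ.ν` of a measure on `Aff p d` with a measure on `F_p^d`:
`(μ.ν)(x) = ∑_g μ(g)·ν(g⁻¹.x)` -/
def actConv [NeZero p] (μ : Aff p d → ℝ) (ν : V p d → ℝ) : V p d → ℝ :=
  fun x => ∑ g : Aff p d, μ g * ν (Aff.aact g⁻¹ x)

/-- pushforward of a measure on `Aff p d` under the projection `θ` to the linear part -/
def push [NeZero p] (μ : Aff p d → ℝ) : SL p d → ℝ :=
  fun σ => ∑ g : Aff p d, if Aff.lin g = σ then μ g else 0

/-- `‖L₀^θ(μ)‖` -/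
noncomputable def L0theta [NeZero p] (μ : Aff p d → ℝ) : ℝ := L0norm (push μ)

/-- the pairing `⟨x,ξ⟩` in `F_p` -/
def ip (x ξ : V p d) : ZMod p := ∑ i, x i * ξ i

/-- `e(t) = e^{-2πit/p}` -/
noncomputable def ee (p : ℕ) (t : ZMod p) : ℂ :=
  Complex.exp (-(2 * Real.pi * Complex.I) * (t.val : ℂ) / (p : ℂ))

/-- the Fourier transform on `F_p^d` -/
noncomputable def fourier [NeZero p] (f : V p d → ℂ) (ξ : V p d) : ℂ :=
  ∑ x, ee p (ip x ξ) * f x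

/-- the normalized `L̂⁴` norm on the Fourier side -/
noncomputable def hatNorm4 [NeZero p] (φ : V p d → ℂ) : ℝ :=
  (((p : ℝ) ^ d)⁻¹ * ∑ ξ, ‖φ ξ‖ ^ 4) ^ ((1 : ℝ) / 4)

open Finset Real

section Prob

variable {β : Type*} [Fintype β]

lemma IsProb.le_one {μ : β → ℝ} (hμ : IsProb μ) (x : β) : μ x ≤ 1 :=
  hμ.2 ▸ single_le_sum (fun y _ => hμ.1 y) (mem_univ x)

lemma IsProb.sum_erase [DecidableEq β] {μ : β → ℝ} (hμ : IsProb μ)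
    (x : β) : ∑ y ∈ univ.erase x, μ y = 1 - μ x := by
  rw [← hμ.2, ← add_sum_erase _ _ (mem_univ x), add_sub_cancel_left]

lemma IsProb.sum_mul_le [DecidableEq β] {q c : β → ℝ}
    (hq : IsProb q) (hc : IsProb c) {s r : ℝ} (hs : 0 ≤ s) (hr : 0 ≤ r)
    (hqs : ∀ z, q z ≤ (1 + s) / 2) (hcr : ∀ z, c z ≤ (1 + r) / 2) :
    ∑ z, q z * c z ≤ (1 + s * r) / 2 := by
  by_cases hbig : ∃ z₁, 1 / 2 < q z₁
  · obtain ⟨z₁, hz₁⟩ := hbig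
    have hrest : ∀ z ∈ univ.erase z₁, q z ≤ 1 - q z₁ := fun z hz =>
      hq.sum_erase z₁ ▸ single_le_sum (fun y _ => hq.1 y) hz
    calc ∑ z, q z * c z = q z₁ * c z₁ + ∑ z ∈ univ.erase z₁, q z * c z :=
          (add_sum_erase _ _ (mem_univ z₁)).symm
      _ ≤ q z₁ * c z₁ + ∑ z ∈ univ.erase z₁, (1 - q z₁) * c z := by
          gcongr with z hz
          · exact hc.1 z
          · exact hrest z hz
      _ = q z₁ * c z₁ + (1 - q z₁) * (1 - c z₁) := by rw [← mul_sum, hc.sum_erase]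
      _ ≤ (1 + s * r) / 2 := by
          nlinarith [mul_le_mul_of_nonneg_left (hcr z₁) (by linarith : 0 ≤ 2 * q z₁ - 1),
            mul_le_mul_of_nonneg_right (hqs z₁) hr]
  · push Not at hbig
    calc ∑ z, q z * c z ≤ ∑ z, 1 / 2 * c z :=
          sum_le_sum fun z _ => mul_le_mul_of_nonneg_right (hbig z) (hc.1 z)
      _ = 1 / 2 := by rw [← mul_sum, hc.2, mul_one]
      _ ≤ (1 + s * r) / 2 := by nlinarith [mul_nonneg hs hr]

lemma dirac_isProb [DecidableEq β] (x : β) : IsProb (dirac x) :=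
  ⟨fun y => by unfold dirac; split_ifs <;> norm_num, by simp [dirac]⟩

end Prob

section Group

variable {H : Type*} [Group H] [Fintype H]

lemma check_isProb {μ : H → ℝ} (hμ : IsProb μ) : IsProb (check μ) :=
  ⟨fun g => hμ.1 g⁻¹, (Equiv.sum_comp (Equiv.inv H) μ).trans hμ.2⟩

lemma conv_isProb {μ ν : H → ℝ} (hμ : IsProb μ) (hν : IsProb ν) : IsProb (conv μ ν) := by
  refine ⟨fun g => sum_nonneg fun h _ => mul_nonneg (hμ.1 h) (hν.1 _), ?_⟩
  simp only [conv]
  rw [sum_comm]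
  refine (sum_congr rfl fun h _ => ?_).trans hμ.2
  rw [← mul_sum, (Group.mulLeft_bijective h⁻¹).sum_comp ν, hν.2, mul_one]

lemma itconv_isProb [DecidableEq H] {μ : H → ℝ} (hμ : IsProb μ) : ∀ n, IsProb (itconv μ n)
  | 0 => dirac_isProb 1
  | n + 1 => conv_isProb (itconv_isProb hμ n) hμ

end Group

namespace Aff

lemma aact_mul (g h : Aff p d) (x : V p d) : aact (g * h) x = aact g (aact h x) := by
  simp [aact, vec, lin, mul_def, Matrix.mulVec_add, Matrix.mulVec_mulVec, add_assoc]

lemma aact_one (x : V p d) : aact (1 : Aff p d) x = x := by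
  change (0 : V p d) + ((1 : SL p d) : Matrix (Fin d) (Fin d) (ZMod p)) *ᵥ x = x
  simp

lemma sum_aact [NeZero p] (g : Aff p d) (ρ : V p d → ℝ) : ∑ x, ρ (aact g x) = ∑ x, ρ x :=
  (Function.bijective_iff_has_inverse.mpr ⟨aact g⁻¹,
    fun x => by rw [← aact_mul, inv_mul_cancel, aact_one],
    fun x => by rw [← aact_mul, mul_inv_cancel, aact_one]⟩).sum_comp ρ

end Aff

section ActConv

variable [NeZero p]

lemma actConv_isProb {μ : Aff p d → ℝ} {ρ : V p d → ℝ} (hμ : IsProb μ) (hρ : IsProb ρ) :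
    IsProb (actConv μ ρ) := by
  refine ⟨fun x => sum_nonneg fun g _ => mul_nonneg (hμ.1 g) (hρ.1 _), ?_⟩
  simp only [actConv]
  rw [sum_comm]
  simp_rw [← mul_sum, Aff.sum_aact, hρ.2, mul_one, hμ.2]

lemma actConv_le_of_le {μ : Aff p d → ℝ} {ρ : V p d → ℝ} {a : ℝ} (hμ : IsProb μ)
    (hρ : ∀ x, ρ x ≤ a) (x : V p d) : actConv μ ρ x ≤ a :=
  calc actConv μ ρ x ≤ ∑ g, μ g * a :=
        sum_le_sum fun g _ => mul_le_mul_of_nonneg_left (hρ _) (hμ.1 g)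
    _ = a := by rw [← sum_mul, hμ.2, one_mul]

lemma actConv_conv (μ₁ μ₂ : Aff p d → ℝ) (ρ : V p d → ℝ) :
    actConv (conv μ₁ μ₂) ρ = actConv μ₁ (actConv μ₂ ρ) := by
  ext x
  simp only [actConv, conv, sum_mul, mul_sum]
  rw [sum_comm]
  refine sum_congr rfl fun h _ => ?_
  rw [← Equiv.sum_comp (Equiv.mulLeft h)]
  simp [mul_inv_rev, Aff.aact_mul, mul_assoc]

lemma actConv_eq_sum_dirac (μ : Aff p d → ℝ) (ρ : V p d → ℝ) (x : V p d) :
    actConv μ ρ x = ∑ z, actConv μ (dirac z) x * ρ z := by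
  simp only [actConv, sum_mul]
  rw [sum_comm]
  simp [dirac]

lemma isProb_actConv_dirac_apply {μ : Aff p d → ℝ} (hμ : IsProb μ) (x : V p d) :
    IsProb fun z => actConv μ (dirac z) x := by
  refine ⟨fun z => (actConv_isProb hμ (dirac_isProb z)).1 x, ?_⟩
  simp only [actConv]
  rw [sum_comm]
  simpa [dirac] using hμ.2

lemma actConv_itconv_dirac_le {ν : Aff p d → ℝ} (hν : IsProb ν) {r : ℝ} (hr : 0 ≤ r)
    (hνr : ∀ y x, actConv ν (dirac y) x ≤ (1 + r) / 2) (k : ℕ) (x y : V p d) :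
    actConv (itconv ν k) (dirac y) x ≤ (1 + r ^ k) / 2 := by
  induction k generalizing y with
  | zero =>
    norm_num
    exact (actConv_isProb (itconv_isProb hν 0) (dirac_isProb y)).le_one x
  | succ k ih =>
    rw [itconv, actConv_conv, actConv_eq_sum_dirac, pow_succ]
    exact (isProb_actConv_dirac_apply (itconv_isProb hν k) x).sum_mul_le
      (actConv_isProb hν (dirac_isProb y)) (pow_nonneg hr k) hr (fun z => ih z) (hνr y)

end ActConv

lemma pow_le_one_div_eight {r t : ℝ} {l : ℕ} (hr₀ : 0 ≤ r) (hr : r ≤ exp (-t))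
    (hl : 6 ≤ t * l) : r ^ l ≤ 1 / 8 := by
  have h8 : (8 : ℝ) ≤ exp 6 := by
    have := add_one_le_exp 3
    rw [show (6 : ℝ) = 3 + 3 by norm_num, exp_add]
    nlinarith
  calc r ^ l ≤ exp (-t) ^ l := pow_le_pow_left₀ hr₀ hr l
    _ = exp (-(t * l)) := by rw [← exp_nat_mul]; ring_nf
    _ ≤ exp (-6) := exp_le_exp.mpr (by linarith)
    _ ≤ 1 / 8 := by rw [exp_neg, one_div]; exact inv_anti₀ (by norm_num) h8

theorem statement17_general (p d : ℕ) [Fact p.Prime]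
    (μ : Aff p d → ℝ) (hμ : IsProb μ)
    (α : ℝ) (hα : α = ⨆ x : V p d, ⨆ y : V p d, actConv μ (dirac x) y) (hα1 : α < 1)
    (l₀ : ℕ) (hl₀ : 3 / (1 - α) ≤ (l₀ : ℝ)) :
    (⨆ x : V p d, ⨆ y : V p d,
        actConv (itconv (conv (check μ) μ) l₀) (dirac y) x) ≤ 9 / 16 := by
  set r := max (2 * α - 1) 0
  have hμα : ∀ z w, actConv μ (dirac z) w ≤ α := fun z w => hα ▸
    (le_ciSup (Finite.bddAbove_range _) w).trans
      (le_ciSup (f := fun x => ⨆ y, actConv μ (dirac x) y) (Finite.bddAbove_range _) z)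
  have hν : ∀ z w, actConv (conv (check μ) μ) (dirac z) w ≤ (1 + r) / 2 := fun z w => by
    rw [actConv_conv]
    exact actConv_le_of_le (check_isProb hμ) (fun w' => (hμα z w').trans
      (by linarith [le_max_left (2 * α - 1) 0])) w
  have hr : r ^ l₀ ≤ 1 / 8 := by
    rw [div_le_iff₀ (by linarith)] at hl₀
    refine pow_le_one_div_eight (t := 2 * (1 - α)) (le_max_right _ _)
      (max_le ?_ (exp_pos _).le) (by linarith)
    linarith [one_sub_le_exp_neg (2 * (1 - α))]
  refine ciSup_le fun x => ciSup_le fun y => ?_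
  linarith [actConv_itconv_dirac_le (conv_isProb (check_isProb hμ) hμ) (le_max_right _ _) hν
    l₀ x y]

/-- Let `μ` be a probability measure on `G` with
`α = max_{x,y} (μ.δ_x)(y) < 1`, and for `l ≥ 1` let
`α_l = max_{x,y} ((μ̌∗μ)^{*(l)}.δ_y)(x)`.  Then `α_{l₀} ≤ 9/16` for every integer
`l₀ ≥ 3/(1−α)`. -/
theorem statement17 (p d : ℕ) [Fact p.Prime] (hd : 0 < d)
    (μ : Aff p d → ℝ) (hμ : IsProb μ)
    (α : ℝ) (hα : α = ⨆ x : V p d, ⨆ y : V p d, actConv μ (dirac x) y) (hα1 : α < 1)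
    (l₀ : ℕ) (hl₀ : 3 / (1 - α) ≤ (l₀ : ℝ)) :
    (⨆ x : V p d, ⨆ y : V p d,
        actConv (itconv (conv (check μ) μ) l₀) (dirac y) x) ≤ 9 / 16 :=
  statement17_general p d μ hμ α hα hα1 l₀ hl₀

end Paper
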